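/- arXiv:2208.00384 — 3 statements merged into one kernel-verified Lean document; each statement's English description precedes it below -/
import Mathlib

section
/- Let π and σ be partitions of the finite set U = {u_1,…,u_n} with point probabilities p_i ≥ 0 summing to 1. Then the Lüders mixture operation applied to the density matrix of π using the blocks of σ yields the density matrix of the join: Σ_{C ∈ σ} P_C · ρ(π) · P_C = ρ(π ∨ σ). -/
open Finset
open scoped Classical

noncomputable section

/-- A partition of the finite set `Fin n`: a collection of nonempty,
pairwise disjoint blocks whose union is all of `Fin n`. -/
structure SetPartition (n : ℕ) where
  parts : Finset (Finset (Fin n))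
  nonempty_blocks : ∀ B ∈ parts, B.Nonempty
  disjoint_blocks : ∀ B ∈ parts, ∀ C ∈ parts, B ≠ C → Disjoint B C
  covers : ∀ i : Fin n, ∃ B ∈ parts, i ∈ B

/-- `i` and `k` lie in the same block of the collection of blocks `P`. -/
def sameBlock {n : ℕ} (P : Finset (Finset (Fin n))) (i k : Fin n) : Prop :=
  ∃ B ∈ P, i ∈ B ∧ k ∈ B

/-- The indit set: ordered pairs lying in the same block. -/
def inditset {n : ℕ} (P : Finset (Finset (Fin n))) : Finset (Fin n × Fin n) :=
  Finset.univ.filter fun q => sameBlock P q.1 q.2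

/-- The ditset: ordered pairs lying in different blocks. -/
def ditset {n : ℕ} (P : Finset (Finset (Fin n))) : Finset (Fin n × Fin n) :=
  Finset.univ.filter fun q => ¬ sameBlock P q.1 q.2

/-- The blocks of the join of two partitions: all nonempty intersections
`B ∩ C` of a block `B` of the first with a block `C` of the second. -/
def joinParts {n : ℕ} (P Q : Finset (Finset (Fin n))) : Finset (Finset (Fin n)) :=
  ((P ×ˢ Q).image fun p => p.1 ∩ p.2).filter fun s => s.Nonempty

/-- Logical entropy: the sum of `p i * p k` over all distinctions `(i, k)`. -/
def lEnt {n : ℕ} (p : Fin n → ℝ) (P : Finset (Finset (Fin n))) : ℝ :=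
  ∑ q ∈ ditset P, p q.1 * p q.2

/-- The density matrix of a collection of blocks `P` with point probabilities `p`:
entry `(i,k)` is `√(p i * p k)` if `i` and `k` are in the same block, else `0`. -/
def rho {n : ℕ} (p : Fin n → ℝ) (P : Finset (Finset (Fin n))) :
    Matrix (Fin n) (Fin n) ℝ :=
  Matrix.of fun i k => if sameBlock P i k then Real.sqrt (p i * p k) else 0

/-- The diagonal 0–1 projection matrix onto the coordinates in `C`. -/
def projMat {n : ℕ} (C : Finset (Fin n)) : Matrix (Fin n) (Fin n) ℝ :=
  Matrix.diagonal fun i => if i ∈ C then 1 else 0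

/-- The Lüders mixture operation applied to the density matrix of `π` using the
blocks of `σ` yields the density matrix of the join `π ∨ σ`. -/
theorem luders_mixture_eq_join {n : ℕ} (p : Fin n → ℝ)
    (hp : ∀ i, 0 ≤ p i) (hsum : ∑ i, p i = 1) (π σ : SetPartition n) :
    ∑ C ∈ σ.parts, projMat C * rho p π.parts * projMat C
      = rho p (joinParts π.parts σ.parts) := by
  ext i k
  rw [Matrix.sum_apply]
  have hterm : ∀ C ∈ σ.parts, (projMat C * rho p π.parts * projMat C) i k
      = if i ∈ C ∧ k ∈ C then rho p π.parts i k else 0 := by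
    intro C _
    simp only [projMat, Matrix.mul_diagonal, Matrix.diagonal_mul]
    split_ifs <;> simp_all
  rw [Finset.sum_congr rfl hterm]
  by_cases hjk : ∃ C ∈ σ.parts, i ∈ C ∧ k ∈ C
  · obtain ⟨C₀, hC₀, hiC, hkC⟩ := hjk
    have huniq : ∀ C ∈ σ.parts, (i ∈ C ∧ k ∈ C) ↔ C = C₀ := by
      intro C hC
      constructor
      · rintro ⟨hi, _⟩
        by_contra hne
        simpa using (σ.disjoint_blocks C hC C₀ hC₀ hne).le_bot
          (by simp [hi, hiC] : i ∈ C ⊓ C₀)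
      · rintro rfl; exact ⟨hiC, hkC⟩
    rw [Finset.sum_congr rfl (fun C hC => by rw [if_congr (huniq C hC) rfl rfl]),
        Finset.sum_ite_eq' σ.parts C₀ (fun _ => rho p π.parts i k), if_pos hC₀]
    unfold rho
    simp only [Matrix.of_apply]
    by_cases hπ : sameBlock π.parts i k
    · rw [if_pos hπ, if_pos]
      obtain ⟨B, hB, hiB, hkB⟩ := hπ
      refine ⟨B ∩ C₀, ?_, Finset.mem_inter.mpr ⟨hiB, hiC⟩, Finset.mem_inter.mpr ⟨hkB, hkC⟩⟩
      simp only [joinParts, Finset.mem_filter, Finset.mem_image]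
      exact ⟨⟨(B, C₀), Finset.mem_product.mpr ⟨hB, hC₀⟩, rfl⟩,
        ⟨i, Finset.mem_inter.mpr ⟨hiB, hiC⟩⟩⟩
    · rw [if_neg hπ, if_neg]
      rintro ⟨D, hD, hiD, hkD⟩
      simp only [joinParts, Finset.mem_filter, Finset.mem_image] at hD
      obtain ⟨⟨⟨B, C⟩, hBC, rfl⟩, -⟩ := hD
      exact hπ ⟨B, (Finset.mem_product.mp hBC).1, (Finset.mem_inter.mp hiD).1,
        (Finset.mem_inter.mp hkD).1⟩
  · rw [Finset.sum_eq_zero, eq_comm]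
    · unfold rho; simp only [Matrix.of_apply]
      rw [if_neg]
      rintro ⟨D, hD, hiD, hkD⟩
      simp only [joinParts, Finset.mem_filter, Finset.mem_image] at hD
      obtain ⟨⟨⟨B, C⟩, hBC, rfl⟩, -⟩ := hD
      exact hjk ⟨C, (Finset.mem_product.mp hBC).2, (Finset.mem_inter.mp hiD).2,
        (Finset.mem_inter.mp hkD).2⟩
    · intro C hC; rw [if_neg]; exact fun h => hjk ⟨C, hC, h⟩
end
end

section
/- Let ρ be a Hermitian n×n complex matrix and f : {1,…,n} → β a labeling function; let ρ̂ be the Lüders mixture of ρ with respect to f, i.e., ρ̂_{jk} = ρ_{jk} if f(j) = f(k) and ρ̂_{jk} = 0 otherwise. Then the increase in quantum logical entropy (1 − tr[ρ̂²]) − (1 − tr[ρ²]) equals the sum of the absolute squares of the entries zeroed by the operation: Σ_{(j,k) : f(j) ≠ f(k)} ‖ρ_{jk}‖². -/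
/-!
For a Hermitian `A` one has `A k j = conj (A j k)`, so `tr (A * A) = ∑ j k, A j k * A k j`
is the squared Frobenius norm `∑ j k, ‖A j k‖ ^ 2`. The Lüders mixture of a Hermitian matrix is
again Hermitian, so the entropy increase is the entrywise difference of squared norms, which
vanishes on the kept entries and is `‖ρ j k‖ ^ 2` on the zeroed ones.
-/

open scoped Classical

noncomputable section

/-- The Lüders mixture of a matrix `ρ` with respect to a labeling function `f`:
the entry `(j,k)` is kept when `f j = f k` and zeroed otherwise. -/
def luders {n : ℕ} {β : Type*} (f : Fin n → β) (ρ : Matrix (Fin n) (Fin n) ℂ) :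
    Matrix (Fin n) (Fin n) ℂ :=
  Matrix.of fun j k => if f j = f k then ρ j k else 0

theorem Matrix.IsHermitian.trace_mul_self {ι 𝕜 : Type*} [Fintype ι] [RCLike 𝕜]
    {A : Matrix ι ι 𝕜} (hA : A.IsHermitian) :
    (A * A).trace = ((∑ j, ∑ k, ‖A j k‖ ^ 2 : ℝ) : 𝕜) := by
  simp only [Matrix.trace, Matrix.diag, Matrix.mul_apply]
  push_cast
  refine Finset.sum_congr rfl fun j _ => Finset.sum_congr rfl fun k _ => ?_
  rw [← hA.apply k j, RCLike.star_def, RCLike.mul_conj]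

theorem isHermitian_luders {n : ℕ} {β : Type*} (f : Fin n → β)
    {ρ : Matrix (Fin n) (Fin n) ℂ} (hρ : ρ.IsHermitian) : (luders f ρ).IsHermitian := by
  ext j k
  simp only [luders, Matrix.conjTranspose_apply, Matrix.of_apply, eq_comm (a := f k)]
  split_ifs
  · exact hρ.apply j k
  · exact star_zero ℂ

/-- The increase in quantum logical entropy `(1 − tr[ρ̂²]) − (1 − tr[ρ²])` due to
the Lüders mixture operation equals the sum of the absolute squares of the
entries of `ρ` that are zeroed by the operation. -/
theorem entropy_increase_eq_sum_zeroed {n : ℕ} {β : Type*}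
    (ρ : Matrix (Fin n) (Fin n) ℂ) (hρ : ρ.IsHermitian) (f : Fin n → β) :
    (1 - Matrix.trace (luders f ρ * luders f ρ)) - (1 - Matrix.trace (ρ * ρ))
      = ((∑ j, ∑ k, if f j ≠ f k then ‖ρ j k‖ ^ 2 else 0 : ℝ) : ℂ) := by
  rw [sub_sub_sub_cancel_left, hρ.trace_mul_self, (isHermitian_luders f hρ).trace_mul_self]
  norm_cast
  congr 1
  simp only [← Finset.sum_sub_distrib]
  refine Finset.sum_congr rfl fun j _ => Finset.sum_congr rfl fun k _ => ?_
  by_cases h : f j = f k <;> simp [luders, h]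
end
end

section
/- Let π be a partition of the finite set U = {u_1,…,u_n} with point probabilities p_i ≥ 0 summing to 1. Then tr[ρ(π)²] = Σ_{B ∈ π} Pr(B)², and therefore h(π) = 1 − tr[ρ(π)²]. -/
open Finset
open scoped Classical

noncomputable section

/-! By symmetry of `ρ`, each term `ρ_{ik} ρ_{ki}` of `tr ρ²` is `p_i p_k` if `(i, k)` is an
indit and `0` otherwise, so the trace is the weight of the indit set. That set is the disjoint
union of the squares `B × B` of the blocks, giving `Σ_B Pr(B)²`; and indits and dits together
carry the whole product weight `(Σ p_i)² = 1`. -/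

theorem sameBlock_comm {n : ℕ} (P : Finset (Finset (Fin n))) (i k : Fin n) :
    sameBlock P i k ↔ sameBlock P k i :=
  ⟨fun ⟨B, hB, hi, hk⟩ => ⟨B, hB, hk, hi⟩, fun ⟨B, hB, hk, hi⟩ => ⟨B, hB, hi, hk⟩⟩

theorem rho_mul_rho_swap {n : ℕ} {p : Fin n → ℝ} (hp : ∀ i, 0 ≤ p i)
    (P : Finset (Finset (Fin n))) (i k : Fin n) :
    rho p P i k * rho p P k i = if sameBlock P i k then p i * p k else 0 := by
  by_cases h : sameBlock P i k
  · simp only [rho, Matrix.of_apply, if_pos h, if_pos ((sameBlock_comm P i k).1 h),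
      mul_comm (p k) (p i), Real.mul_self_sqrt (mul_nonneg (hp i) (hp k))]
  · simp only [rho, Matrix.of_apply, if_neg h, zero_mul]

theorem trace_rho_mul_rho {n : ℕ} {p : Fin n → ℝ} (hp : ∀ i, 0 ≤ p i)
    (P : Finset (Finset (Fin n))) :
    Matrix.trace (rho p P * rho p P) = ∑ q ∈ inditset P, p q.1 * p q.2 := by
  simp only [Matrix.trace, Matrix.diag, Matrix.mul_apply, rho_mul_rho_swap hp]
  rw [inditset, Finset.sum_filter, ← Finset.sum_product', Finset.univ_product_univ]

theorem inditset_eq_biUnion {n : ℕ} (P : Finset (Finset (Fin n))) :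
    inditset P = P.biUnion fun B => B ×ˢ B := by
  ext q
  rw [inditset, Finset.mem_filter]
  simp only [sameBlock, Finset.mem_univ, true_and, Finset.mem_biUnion, Finset.mem_product]

theorem sum_inditset_eq_sum_sq {n : ℕ} (p : Fin n → ℝ) {P : Finset (Finset (Fin n))}
    (hP : (P : Set (Finset (Fin n))).PairwiseDisjoint id) :
    ∑ q ∈ inditset P, p q.1 * p q.2 = ∑ B ∈ P, (∑ i ∈ B, p i) ^ 2 := by
  have hprod : (P : Set (Finset (Fin n))).PairwiseDisjoint fun B => B ×ˢ B :=
    fun B hB C hC hne => Finset.disjoint_product.2 (Or.inl (hP hB hC hne))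
  rw [inditset_eq_biUnion, Finset.sum_biUnion hprod]
  exact Finset.sum_congr rfl fun B _ => by rw [Finset.sum_product, sq, Finset.sum_mul_sum]

theorem sum_inditset_add_lEnt {n : ℕ} (p : Fin n → ℝ) (P : Finset (Finset (Fin n))) :
    ∑ q ∈ inditset P, p q.1 * p q.2 + lEnt p P = (∑ i, p i) ^ 2 := by
  rw [lEnt, inditset, ditset, Finset.sum_filter_add_sum_filter_not, sq, Finset.sum_mul_sum,
    ← Finset.sum_product', Finset.univ_product_univ]

/-- `tr[ρ(π)²] = Σ_{B ∈ π} Pr(B)²`, and therefore the logical entropy satisfies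
`h(π) = 1 − tr[ρ(π)²]`. -/
theorem trace_rho_sq_and_entropy {n : ℕ} (p : Fin n → ℝ)
    (hp : ∀ i, 0 ≤ p i) (hsum : ∑ i, p i = 1) (π : SetPartition n) :
    Matrix.trace (rho p π.parts * rho p π.parts)
        = ∑ B ∈ π.parts, (∑ i ∈ B, p i) ^ 2
      ∧ lEnt p π.parts = 1 - Matrix.trace (rho p π.parts * rho p π.parts) := by
  have hdisj : (π.parts : Set (Finset (Fin n))).PairwiseDisjoint id :=
    fun B hB C hC hne => π.disjoint_blocks B hB C hC hne
  rw [trace_rho_mul_rho hp]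
  refine ⟨sum_inditset_eq_sum_sq p hdisj, ?_⟩
  have htotal := sum_inditset_add_lEnt p π.parts
  rw [hsum, one_pow] at htotal
  linarith
end
end
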